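/- arXiv:1308.3536 — 2 statements merged into one kernel-verified Lean document; each statement's English description precedes it below -/
import Mathlib

section
/- Interval modules are indecomposable: for any shape ε with n slots and any 1 ≤ b ≤ d ≤ n, if the interval module I(b,d) is isomorphic to a direct sum V ⊕ W of zigzag modules of shape ε, then V is the zero module or W is the zero module. -/
universe u

/-- Commutativity of a square whose horizontal maps point in the direction given by `b`. -/
def zigCommute (k : Type u) [Field k] {A B A' B' : Type u}
    [AddCommGroup A] [Module k A] [AddCommGroup B] [Module k B]
    [AddCommGroup A'] [Module k A'] [AddCommGroup B'] [Module k B'] (b : Bool) :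
    cond b (A →ₗ[k] B) (B →ₗ[k] A) → cond b (A' →ₗ[k] B') (B' →ₗ[k] A') →
      (A →ₗ[k] A') → (B →ₗ[k] B') → Prop :=
  match b with
  | true => fun q q' fA fB => q'.comp fA = fB.comp q
  | false => fun q q' fA fB => fA.comp q = q'.comp fB

/-- Construct a direction-dependent map from candidates for each direction. -/
def condMk (k : Type u) [Field k] {A B : Type u}
    [AddCommGroup A] [Module k A] [AddCommGroup B] [Module k B] (b : Bool)
    (f : b = true → (A →ₗ[k] B)) (g : b = false → (B →ₗ[k] A)) :
    cond b (A →ₗ[k] B) (B →ₗ[k] A) :=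
  match b with
  | true => f rfl
  | false => g rfl

/-- A zigzag module over the field `k` with `n` slots and direction vector `ε`
(`ε i = true` means the `i`-th connecting map points forward). All slots are
finite-dimensional `k`-vector spaces. -/
structure ZigzagModule (k : Type u) [Field k] (n : ℕ) (ε : ℕ → Bool) where
  V : Fin n → Type u
  [acg : ∀ i, AddCommGroup (V i)]
  [mod : ∀ i, Module k (V i)]
  [fd : ∀ i, FiniteDimensional k (V i)]
  q : ∀ (i : ℕ) (h : i + 1 < n),
    cond (ε i) (V ⟨i, Nat.lt_of_succ_lt h⟩ →ₗ[k] V ⟨i + 1, h⟩)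
      (V ⟨i + 1, h⟩ →ₗ[k] V ⟨i, Nat.lt_of_succ_lt h⟩)

attribute [instance] ZigzagModule.acg ZigzagModule.mod ZigzagModule.fd

variable (k : Type u) [Field k] (n : ℕ) (ε : ℕ → Bool)

/-- A morphism of zigzag modules: linear maps at every slot commuting with the
connecting maps. -/
structure ZigzagHom (V W : ZigzagModule k n ε) where
  f : ∀ i, V.V i →ₗ[k] W.V i
  comm : ∀ (i : ℕ) (h : i + 1 < n),
    zigCommute k (ε i) (V.q i h) (W.q i h) (f ⟨i, Nat.lt_of_succ_lt h⟩) (f ⟨i + 1, h⟩)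

/-- An isomorphism of zigzag modules: linear equivalences at every slot commuting
with the connecting maps. -/
structure ZigzagIso (V W : ZigzagModule k n ε) where
  f : ∀ i, V.V i ≃ₗ[k] W.V i
  comm : ∀ (i : ℕ) (h : i + 1 < n),
    zigCommute k (ε i) (V.q i h) (W.q i h) (f ⟨i, Nat.lt_of_succ_lt h⟩).toLinearMap
      (f ⟨i + 1, h⟩).toLinearMap

/-- Direction-dependent product of two connecting maps. -/
def condProdMap {A B A' B' : Type u}
    [AddCommGroup A] [Module k A] [AddCommGroup B] [Module k B]
    [AddCommGroup A'] [Module k A'] [AddCommGroup B'] [Module k B'] (b : Bool) :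
    cond b (A →ₗ[k] B) (B →ₗ[k] A) → cond b (A' →ₗ[k] B') (B' →ₗ[k] A') →
      cond b ((A × A') →ₗ[k] (B × B')) ((B × B') →ₗ[k] (A × A')) :=
  match b with
  | true => fun q q' => q.prodMap q'
  | false => fun q q' => q.prodMap q'

/-- Slotwise direct sum of two zigzag modules. -/
def ZigzagModule.dsum (V W : ZigzagModule k n ε) : ZigzagModule k n ε where
  V i := V.V i × W.V i
  q i h := condProdMap k (ε i) (V.q i h) (W.q i h)

/-- The zero zigzag module. -/
def ZigzagModule.zero : ZigzagModule k n ε where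
  V _ := PUnit
  q i h := condMk k (ε i) (fun _ => 0) (fun _ => 0)

/-- Finite direct sum of zigzag modules. -/
def ZigzagModule.finDSum : (N : ℕ) → (Fin N → ZigzagModule k n ε) → ZigzagModule k n ε
  | 0, _ => ZigzagModule.zero k n ε
  | N + 1, M => ZigzagModule.dsum k n ε (M 0) (ZigzagModule.finDSum N (fun l => M l.succ))

/-- The `i`-th slot of the interval module `I(b,d)` (slots are numbered `1,…,n`,
so the slot of index `i : Fin n` is slot `i+1`): it is (a copy of) `k` for
`b ≤ i+1 ≤ d` and `0` otherwise. -/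
def intervalSub (b d i : ℕ) : Submodule k k :=
  if b ≤ i + 1 ∧ i + 1 ≤ d then ⊤ else ⊥

/-- Forward connecting map of the interval module: the identity between two
adjacent copies of `k`, and zero otherwise. -/
noncomputable def intervalMapF (b d i : ℕ) :
    intervalSub k b d i →ₗ[k] intervalSub k b d (i + 1) :=
  if h : (b ≤ i + 1 ∧ i + 1 ≤ d) ∧ (b ≤ i + 2 ∧ i + 2 ≤ d) then
    (LinearMap.id (R := k) (M := k)).restrict
      (fun x _ => by
        unfold intervalSub
        rw [if_pos (show b ≤ i + 1 + 1 ∧ i + 1 + 1 ≤ d from h.2)]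
        exact Submodule.mem_top)
  else 0

/-- Backward connecting map of the interval module: the identity between two
adjacent copies of `k`, and zero otherwise. -/
noncomputable def intervalMapB (b d i : ℕ) :
    intervalSub k b d (i + 1) →ₗ[k] intervalSub k b d i :=
  if h : (b ≤ i + 1 ∧ i + 1 ≤ d) ∧ (b ≤ i + 2 ∧ i + 2 ≤ d) then
    (LinearMap.id (R := k) (M := k)).restrict
      (fun x _ => by
        unfold intervalSub
        rw [if_pos (show b ≤ i + 1 ∧ i + 1 ≤ d from h.1)]
        exact Submodule.mem_top)
  else 0

/-- The interval module `I(b,d)` of shape `ε`. -/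
noncomputable def intervalModule (b d : ℕ) : ZigzagModule k n ε where
  V i := intervalSub k b d i.1
  q i h := condMk k (ε i) (fun _ => intervalMapF k b d i) (fun _ => intervalMapB k b d i)

/-!
At every slot the dimensions of `V` and `W` add up to that of `I(b,d)`: one inside the
interval, zero outside. Inside the interval the connecting maps of `I(b,d)` are identities, so
the isomorphism makes the connecting maps of `V ⊕ W`, hence those of `V`, bijective there, and
`dim V` is constant on the interval. If that constant is `0` then `V = 0`; if it is `1` then
`W = 0`.
-/

def CondBijective (k : Type u) [Field k] {A B : Type u}
    [AddCommGroup A] [Module k A] [AddCommGroup B] [Module k B] (b : Bool) :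
    cond b (A →ₗ[k] B) (B →ₗ[k] A) → Prop :=
  match b with
  | true => fun q => Function.Bijective (DFunLike.coe (F := A →ₗ[k] B) q)
  | false => fun q => Function.Bijective (DFunLike.coe (F := B →ₗ[k] A) q)

section CondBijective

variable {k : Type u} [Field k] {A B A' B' : Type u}
  [AddCommGroup A] [Module k A] [AddCommGroup B] [Module k B]
  [AddCommGroup A'] [Module k A'] [AddCommGroup B'] [Module k B']

theorem condBijective_condMk (b : Bool) (f : b = true → (A →ₗ[k] B))
    (g : b = false → (B →ₗ[k] A)) (hf : ∀ h, Function.Bijective (f h))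
    (hg : ∀ h, Function.Bijective (g h)) : CondBijective k b (condMk k b f g) := by
  cases b
  · exact hg rfl
  · exact hf rfl

theorem CondBijective.of_zigCommute {b : Bool} {q : cond b (A →ₗ[k] B) (B →ₗ[k] A)}
    {q' : cond b (A' →ₗ[k] B') (B' →ₗ[k] A')} (eA : A ≃ₗ[k] A') (eB : B ≃ₗ[k] B')
    (hc : zigCommute k b q q' eA.toLinearMap eB.toLinearMap) (hq : CondBijective k b q) :
    CondBijective k b q' := by
  cases b
  · change eA.toLinearMap ∘ₗ (q : B →ₗ[k] A) = (q' : B' →ₗ[k] A') ∘ₗ eB.toLinearMap at hc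
    have hfun := congrArg DFunLike.coe hc
    rw [LinearMap.coe_comp, LinearMap.coe_comp] at hfun
    exact (Function.Bijective.of_comp_iff _ eB.bijective).1 (hfun ▸ eA.bijective.comp hq)
  · change (q' : A' →ₗ[k] B') ∘ₗ eA.toLinearMap = eB.toLinearMap ∘ₗ (q : A →ₗ[k] B) at hc
    have hfun := congrArg DFunLike.coe hc
    rw [LinearMap.coe_comp, LinearMap.coe_comp] at hfun
    exact (Function.Bijective.of_comp_iff _ eA.bijective).1 (hfun ▸ eB.bijective.comp hq)

theorem CondBijective.of_condProdMap {b : Bool} {q : cond b (A →ₗ[k] B) (B →ₗ[k] A)}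
    {q' : cond b (A' →ₗ[k] B') (B' →ₗ[k] A')}
    (h : CondBijective k b (condProdMap k b q q')) : CondBijective k b q := by
  cases b
  · change Function.Bijective ((q : B →ₗ[k] A).prodMap (q' : B' →ₗ[k] A')) at h
    rw [LinearMap.coe_prodMap, Prod.map_bijective] at h
    exact h.1
  · change Function.Bijective ((q : A →ₗ[k] B).prodMap (q' : A' →ₗ[k] B')) at h
    rw [LinearMap.coe_prodMap, Prod.map_bijective] at h
    exact h.1

theorem CondBijective.finrank_eq {b : Bool} {q : cond b (A →ₗ[k] B) (B →ₗ[k] A)}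
    (h : CondBijective k b q) : Module.finrank k A = Module.finrank k B := by
  cases b
  · exact (LinearEquiv.ofBijective (q : B →ₗ[k] A) h).finrank_eq.symm
  · exact (LinearEquiv.ofBijective (q : A →ₗ[k] B) h).finrank_eq

end CondBijective

theorem LinearMap.bijective_restrict_id {R M : Type*} [Semiring R] [AddCommMonoid M]
    [Module R M] {p q : Submodule R M} (hpq : ∀ x ∈ p, LinearMap.id (R := R) x ∈ q)
    (hqp : q ≤ p) : Function.Bijective (LinearMap.id.restrict hpq) :=
  ⟨fun _ _ h => Subtype.ext (by simpa using congrArg Subtype.val h), fun y => ⟨⟨y, hqp y.2⟩, rfl⟩⟩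

theorem ZigzagIso.finrank_fst_eq_of_condBijective {k : Type u} [Field k] {n : ℕ} {ε : ℕ → Bool}
    {X V W : ZigzagModule k n ε} (e : ZigzagIso k n ε X (V.dsum k n ε W)) {m : ℕ}
    (hm : m + 1 < n) (hX : CondBijective k (ε m) (X.q m hm)) :
    Module.finrank k (V.V ⟨m, by omega⟩) = Module.finrank k (V.V ⟨m + 1, hm⟩) :=
  (CondBijective.of_condProdMap (hX.of_zigCommute _ _ (e.comm m hm))).finrank_eq

theorem intervalSub_eq_top {b d i : ℕ} (h : b ≤ i + 1 ∧ i + 1 ≤ d) :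
    intervalSub k b d i = ⊤ :=
  if_pos h

theorem finrank_intervalSub (b d i : ℕ) :
    Module.finrank k (intervalSub k b d i) = if b ≤ i + 1 ∧ i + 1 ≤ d then 1 else 0 := by
  by_cases h : b ≤ i + 1 ∧ i + 1 ≤ d
  · rw [intervalSub_eq_top k h, if_pos h, finrank_top, Module.finrank_self]
  · rw [intervalSub, if_neg h, if_neg h, finrank_bot]

theorem intervalModule_condBijective {b d m : ℕ}
    (hm : m + 1 < n) (hbm : b ≤ m + 1) (hmd : m + 2 ≤ d) :
    CondBijective k (ε m) ((intervalModule k n ε b d).q m hm) := by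
  have hin : (b ≤ m + 1 ∧ m + 1 ≤ d) ∧ (b ≤ m + 2 ∧ m + 2 ≤ d) := by omega
  refine condBijective_condMk _ _ _ (fun _ => ?_) (fun _ => ?_)
  · rw [intervalMapF, dif_pos hin]
    exact LinearMap.bijective_restrict_id _ (intervalSub_eq_top k hin.1 ▸ le_top)
  · rw [intervalMapB, dif_pos hin]
    exact LinearMap.bijective_restrict_id _ (intervalSub_eq_top k hin.2 ▸ le_top)

theorem Fin.apply_eq_apply_of_succ_eq {α : Type*} {n l r : ℕ} (g : Fin n → α)
    (hg : ∀ m (hm : m + 1 < n), l ≤ m → m + 1 ≤ r → g ⟨m, by omega⟩ = g ⟨m + 1, hm⟩)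
    {i j : Fin n} (hi : l ≤ i ∧ i ≤ r) (hj : l ≤ j ∧ j ≤ r) : g i = g j := by
  wlog hij : i ≤ j generalizing i j
  · exact (this hj hi (le_of_not_ge hij)).symm
  suffices ∀ m, (i : ℕ) ≤ m → ∀ hm : m < n, m ≤ r → g i = g ⟨m, hm⟩ from this j hij j.2 hj.2
  intro m him
  induction m, him using Nat.le_induction with
  | base => exact fun _ _ => rfl
  | succ m him ih =>
    intro hm hmr
    rw [ih (by omega) (by omega)]
    exact hg m hm (by omega) hmr

theorem intervalModule_indecomposable_general (k : Type u) [Field k] (n : ℕ) (ε : ℕ → Bool)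
    (b d : ℕ)
    (V W : ZigzagModule k n ε)
    (h : Nonempty (ZigzagIso k n ε (intervalModule k n ε b d)
      (ZigzagModule.dsum k n ε V W))) :
    (∀ i, Subsingleton (V.V i)) ∨ (∀ i, Subsingleton (W.V i)) := by
  obtain ⟨e⟩ := h
  have hdim (i : Fin n) : Module.finrank k (V.V i) + Module.finrank k (W.V i) =
      if b ≤ i + 1 ∧ i + 1 ≤ d then 1 else 0 :=
    Module.finrank_prod.symm.trans
      ((e.f i).finrank_eq.symm.trans (finrank_intervalSub k b d i))
  have hconst {i j : Fin n} (hi : b - 1 ≤ i ∧ i ≤ d - 1) (hj : b - 1 ≤ j ∧ j ≤ d - 1) :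
      Module.finrank k (V.V i) = Module.finrank k (V.V j) :=
    Fin.apply_eq_apply_of_succ_eq (fun i => Module.finrank k (V.V i))
      (fun m hm hbm hmd => e.finrank_fst_eq_of_condBijective hm
        (intervalModule_condBijective k n ε hm (by omega) (by omega))) hi hj
  simp only [← Module.finrank_zero_iff (R := k)]
  by_contra! ⟨⟨i, hVi⟩, ⟨j, hWj⟩⟩
  have hi := hdim i
  have hj := hdim j
  split_ifs at hi hj with hi' hj' <;> try omega
  have := hconst (i := i) (j := j) (by omega) (by omega)
  omega

/-- **Interval modules are indecomposable.**
For any shape `ε` with `n` slots and any `1 ≤ b ≤ d ≤ n`, if the interval module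
`I(b,d)` is isomorphic to a direct sum `V ⊕ W` of zigzag modules of shape `ε`,
then `V` is the zero module or `W` is the zero module (every slot is the zero
vector space). -/
theorem intervalModule_indecomposable (k : Type u) [Field k] (n : ℕ) (ε : ℕ → Bool)
    (b d : ℕ) (hb : 1 ≤ b) (hbd : b ≤ d) (hd : d ≤ n)
    (V W : ZigzagModule k n ε)
    (h : Nonempty (ZigzagIso k n ε (intervalModule k n ε b d)
      (ZigzagModule.dsum k n ε V W))) :
    (∀ i, Subsingleton (V.V i)) ∨ (∀ i, Subsingleton (W.V i)) :=
  intervalModule_indecomposable_general k n ε b d V W h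
end

section
/- The Čech complex is sandwiched between two Vietoris–Rips complexes: let d ≥ 1 and let σ be a finite nonempty subset of ℝ^d. (i) If the diameter of σ is at most 2·√((d+1)/(2d)), then there exists a point c ∈ ℝ^d with ‖x − c‖ ≤ 1 for every x ∈ σ, i.e., the closed unit balls centered at the points of σ have a common point. (ii) Conversely, if the closed unit balls centered at the points of σ have a common point, then the diameter of σ is at most 2. Consequently, for any finite S ⊂ ℝ^d, the Vietoris–Rips complex at scale ε = √((d+1)/(2d)) is contained in the Čech complex of unit balls, which is contained in the Vietoris–Rips complex at scale ε = 1. -/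
/-!
Jung's theorem. Let `c` be the centre and `r` the radius of a smallest ball containing `σ`. Then
`c` lies in the convex hull of the points of `σ` at distance `r` from `c`: otherwise a vector
separating `c` from that hull is a direction in which moving `c` brings every farthest point
closer. Write `c = ∑ wᵢ zᵢ` as a positive combination of `k ≤ n + 1` affinely independent such
points. The parallel axis identity gives `∑ᵢ wᵢ ‖zᵢ - zⱼ‖² = 2r²` for every `j`, and the left side
is at most `(1 - wⱼ) D²`; averaging over `j` gives `2r² ≤ D² (1 - ∑ wⱼ²) ≤ D² (1 - 1/k)`, so
`r ≤ D √(n / (2(n + 1)))`, which is `1` for `D = 2 √((n + 1) / (2n))`.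
-/

open Finset Filter Topology Module
open scoped RealInnerProductSpace

/-- The Vietoris–Rips complex at scale `ε` of a finite set `S ⊆ ℝ^d`: the
finite nonempty subsets of `S` of diameter at most `2ε`. -/
def vietorisRips (d : ℕ) (S : Finset (EuclideanSpace ℝ (Fin d))) (ε : ℝ) :
    Set (Finset (EuclideanSpace ℝ (Fin d))) :=
  {σ | σ ⊆ S ∧ σ.Nonempty ∧ ∀ x ∈ σ, ∀ y ∈ σ, dist x y ≤ 2 * ε}

/-- The Čech complex of unit balls on a finite set `S ⊆ ℝ^d`: the finite
nonempty subsets of `S` whose closed unit balls have a common point. -/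
def cechComplex (d : ℕ) (S : Finset (EuclideanSpace ℝ (Fin d))) :
    Set (Finset (EuclideanSpace ℝ (Fin d))) :=
  {σ | σ ⊆ S ∧ σ.Nonempty ∧ ∃ c, ∀ x ∈ σ, dist x c ≤ 1}

section Jung

variable {E : Type*} [NormedAddCommGroup E] [InnerProductSpace ℝ E]

lemma exists_inner_pos_of_notMem_convexHull {s : Set E} (hs : s.Finite) {c : E}
    (hc : c ∉ convexHull ℝ s) : ∃ v : E, ∀ x ∈ s, 0 < ⟪x - c, v⟫ := by
  rcases s.eq_empty_or_nonempty with rfl | hne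
  · exact ⟨0, by simp⟩
  have hconv : Convex ℝ (convexHull ℝ s) := convex_convexHull ℝ s
  obtain ⟨p, hp, hmin⟩ := exists_norm_eq_iInf_of_complete_convex (hne.convexHull (𝕜 := ℝ))
    (hs.isCompact_convexHull (𝕜 := ℝ)).isComplete hconv c
  have hobtuse := (norm_eq_iInf_iff_real_inner_le_zero hconv hp).1 hmin
  have hpc : p - c ≠ 0 := sub_ne_zero.2 fun h => hc (h ▸ hp)
  refine ⟨p - c, fun x hx => ?_⟩
  have hx := hobtuse x (subset_convexHull ℝ s hx)
  have hsplit : ⟪x - c, p - c⟫ = ‖p - c‖ ^ 2 - ⟪c - p, x - p⟫ := by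
    rw [show x - c = (x - p) + (p - c) by abel, inner_add_left, real_inner_self_eq_norm_sq,
      show p - c = -(c - p) by abel, inner_neg_right, real_inner_comm, neg_sub]
    ring
  rw [hsplit]
  linarith [pow_pos (norm_pos_iff.2 hpc) 2]

lemma exists_forall_dist_lt_of_inner_pos {σ : Finset E} {c v : E} {r : ℝ}
    (hσ : ∀ x ∈ σ, dist x c ≤ r) (hv : ∀ x ∈ σ, dist x c = r → 0 < ⟪x - c, v⟫) :
    ∃ c', ∀ x ∈ σ, dist x c' < r := by
  suffices ∀ x ∈ σ, ∀ᶠ t in 𝓝[>] (0 : ℝ), dist x (c + t • v) < r by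
    obtain ⟨t, ht⟩ := ((eventually_all_finset σ).2 this).exists
    exact ⟨c + t • v, ht⟩
  intro x hx
  rcases (hσ x hx).lt_or_eq with hlt | heq
  · have hcont : Tendsto (fun t : ℝ => dist x (c + t • v)) (𝓝 0) (𝓝 (dist x c)) := by
      have : Continuous fun t : ℝ => dist x (c + t • v) := by fun_prop
      simpa using this.tendsto 0
    exact nhdsWithin_le_nhds (hcont.eventually_lt_const hlt)
  have hr : 0 ≤ r := heq ▸ dist_nonneg
  have hsmall : ∀ᶠ t in 𝓝 (0 : ℝ), t * ‖v‖ ^ 2 < 2 * ⟪x - c, v⟫ := by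
    have : Tendsto (fun t : ℝ => t * ‖v‖ ^ 2) (𝓝 0) (𝓝 0) := by
      simpa using (continuous_mul_const (‖v‖ ^ 2)).tendsto (0 : ℝ)
    exact this.eventually_lt_const (by linarith [hv x hx heq])
  filter_upwards [nhdsWithin_le_nhds hsmall, self_mem_nhdsWithin] with t ht (htpos : 0 < t)
  have hsq : dist x (c + t • v) ^ 2 = r ^ 2 - t * (2 * ⟪x - c, v⟫ - t * ‖v‖ ^ 2) := by
    rw [dist_eq_norm, show x - (c + t • v) = (x - c) - t • v by abel, norm_sub_sq_real,
      real_inner_smul_right, norm_smul, ← dist_eq_norm, heq, mul_pow, Real.norm_eq_abs, sq_abs]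
    ring
  refine lt_of_pow_lt_pow_left₀ 2 hr ?_
  rw [hsq]
  nlinarith [mul_pos htpos (sub_pos.2 ht)]

lemma Finset.exists_center_mem_convexHull_farthest [FiniteDimensional ℝ E] (σ : Finset E)
    (hσ : σ.Nonempty) :
    ∃ (c : E) (r : ℝ), (∀ x ∈ σ, dist x c ≤ r) ∧ c ∈ convexHull ℝ {x | x ∈ σ ∧ dist x c = r} := by
  set f : E → ℝ := fun c => σ.sup' hσ (dist · c)
  have hf : Continuous f := Continuous.finset_sup'_apply hσ fun x _ => continuous_const.dist continuous_id
  obtain ⟨x₀, hx₀⟩ := hσ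
  have hcoercive : Tendsto f (cocompact E) atTop :=
    tendsto_atTop_mono (fun c => le_sup' (dist · c) hx₀) (tendsto_dist_left_cocompact_atTop x₀)
  obtain ⟨c, hc⟩ := hf.exists_forall_le hcoercive
  refine ⟨c, f c, fun x hx => le_sup' (dist · c) hx, ?_⟩
  by_contra hnot
  obtain ⟨v, hv⟩ := exists_inner_pos_of_notMem_convexHull
    (σ.finite_toSet.subset fun x hx => hx.1) hnot
  obtain ⟨c', hc'⟩ := exists_forall_dist_lt_of_inner_pos (fun x hx => le_sup' (dist · c) hx)
    fun x hx h => hv x ⟨hx, h⟩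
  exact (hc c').not_gt ((sup'_lt_iff _).2 hc')

lemma sum_mul_dist_sq_eq_add_dist_sq {ι : Type*} {s : Finset ι} {z : ι → E} {w : ι → ℝ}
    (hw : ∑ i ∈ s, w i = 1) (y : E) :
    ∑ i ∈ s, w i * dist (z i) y ^ 2 =
      ∑ i ∈ s, w i * dist (z i) (∑ j ∈ s, w j • z j) ^ 2 + dist (∑ j ∈ s, w j • z j) y ^ 2 := by
  set c := ∑ j ∈ s, w j • z j
  have hmean : ∑ i ∈ s, w i • (z i - c) = 0 := by
    simp only [smul_sub, sum_sub_distrib, ← sum_smul, hw, one_smul, c, sub_self]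
  have hterm : ∀ i, w i * dist (z i) y ^ 2 =
      w i * dist (z i) c ^ 2 + 2 * ⟪w i • (z i - c), c - y⟫ + w i * dist c y ^ 2 := by
    intro i
    rw [dist_eq_norm, dist_eq_norm, dist_eq_norm, show z i - y = (z i - c) + (c - y) by abel,
      norm_add_sq_real, real_inner_smul_left]
    ring
  rw [sum_congr rfl fun i _ => hterm i, sum_add_distrib, sum_add_distrib, ← mul_sum, ← sum_inner,
    hmean, inner_zero_left, ← sum_mul, hw]
  ring

lemma two_mul_sq_mul_card_le {ι : Type*} [Fintype ι] {z : ι → E} {w : ι → ℝ} {r D : ℝ}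
    (hw₀ : ∀ i, 0 ≤ w i) (hw : ∑ i, w i = 1) (hr : ∀ i, dist (z i) (∑ j, w j • z j) = r)
    (hD : ∀ i j, dist (z i) (z j) ≤ D) :
    2 * r ^ 2 * Fintype.card ι ≤ D ^ 2 * (Fintype.card ι - 1) := by
  have hrow : ∀ j, 2 * r ^ 2 ≤ D ^ 2 * (1 - w j) := by
    intro j
    have hsphere : ∑ i, w i * dist (z i) (z j) ^ 2 = 2 * r ^ 2 := by
      rw [sum_mul_dist_sq_eq_add_dist_sq hw, dist_comm, hr j]
      simp only [hr, ← sum_mul, hw]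
      ring
    have hgap : ∀ i, 0 ≤ w i * (D ^ 2 - dist (z i) (z j) ^ 2) := fun i =>
      mul_nonneg (hw₀ i) (sub_nonneg.2 (pow_le_pow_left₀ dist_nonneg (hD i j) 2))
    have := single_le_sum (fun i _ => hgap i) (mem_univ j)
    simp only [dist_self, mul_sub, sum_sub_distrib, ← sum_mul, hw, hsphere] at this
    linarith
  have hmean : 2 * r ^ 2 ≤ D ^ 2 * (1 - ∑ j, w j ^ 2) :=
    calc 2 * r ^ 2 = ∑ j, w j * (2 * r ^ 2) := by rw [← sum_mul, hw, one_mul]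
      _ ≤ ∑ j, w j * (D ^ 2 * (1 - w j)) :=
        sum_le_sum fun j _ => mul_le_mul_of_nonneg_left (hrow j) (hw₀ j)
      _ = D ^ 2 * (∑ j, w j - ∑ j, w j ^ 2) := by
        rw [mul_sub, mul_sum, mul_sum, ← sum_sub_distrib]
        exact sum_congr rfl fun j _ => by ring
      _ = D ^ 2 * (1 - ∑ j, w j ^ 2) := by rw [hw]
  have hcs : 1 ≤ Fintype.card ι * ∑ j, w j ^ 2 := by
    simpa [hw] using sq_sum_le_card_mul_sum_sq (s := univ) (f := w)
  nlinarith [mul_le_mul_of_nonneg_left hcs (sq_nonneg D),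
    mul_le_mul_of_nonneg_right hmean (Nat.cast_nonneg (α := ℝ) (Fintype.card ι))]

lemma two_mul_sq_mul_finrank_succ_le [FiniteDimensional ℝ E] {σ : Finset E} {c : E} {r D : ℝ}
    (hD : ∀ x ∈ σ, ∀ y ∈ σ, dist x y ≤ D) (hc : c ∈ convexHull ℝ {x | x ∈ σ ∧ dist x c = r}) :
    2 * r ^ 2 * (finrank ℝ E + 1) ≤ D ^ 2 * finrank ℝ E := by
  obtain ⟨ι, _, z, w, hz, hzind, hw₀, hw, rfl⟩ := eq_pos_convex_span_of_mem_convexHull hc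
  have hzσ := fun i => hz (Set.mem_range_self i)
  have hk := two_mul_sq_mul_card_le (fun i => (hw₀ i).le) hw (fun i => (hzσ i).2)
    fun i j => hD _ (hzσ i).1 _ (hzσ j).1
  have hcard : (Fintype.card ι : ℝ) ≤ finrank ℝ E + 1 := by
    exact_mod_cast hzind.card_le_finrank_succ.trans (by gcongr; exact Submodule.finrank_le _)
  have hne : Nonempty ι := by
    by_contra h
    simp [not_nonempty_iff.1 h] at hw
  have hpos : (0 : ℝ) < Fintype.card ι := by exact_mod_cast Fintype.card_pos
  nlinarith [sq_nonneg r, sq_nonneg D]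

theorem Finset.Nonempty.exists_forall_dist_le_jung [FiniteDimensional ℝ E] {σ : Finset E}
    (hσ : σ.Nonempty) {D : ℝ} (hD : ∀ x ∈ σ, ∀ y ∈ σ, dist x y ≤ D) :
    ∃ c, ∀ x ∈ σ, dist x c ≤ D * √(finrank ℝ E / (2 * (finrank ℝ E + 1))) := by
  obtain ⟨c, r, hr, hc⟩ := σ.exists_center_mem_convexHull_farthest hσ
  obtain ⟨x₀, hx₀⟩ := hσ
  have hD₀ : 0 ≤ D := dist_nonneg.trans (hD x₀ hx₀ x₀ hx₀)
  have hjung := two_mul_sq_mul_finrank_succ_le hD hc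
  refine ⟨c, fun x hx => (hr x hx).trans ?_⟩
  rw [← Real.sqrt_sq hD₀, ← Real.sqrt_mul (sq_nonneg D), ← mul_div_assoc]
  refine Real.le_sqrt_of_sq_le ((le_div_iff₀ (by positivity)).2 ?_)
  linarith

end Jung

theorem cech_between_vietorisRips_general (d : ℕ) :
    (∀ σ : Finset (EuclideanSpace ℝ (Fin d)), σ.Nonempty →
      (∀ x ∈ σ, ∀ y ∈ σ, dist x y ≤ 2 * Real.sqrt ((d + 1) / (2 * d))) →
      ∃ c : EuclideanSpace ℝ (Fin d), ∀ x ∈ σ, dist x c ≤ 1) ∧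
    (∀ σ : Finset (EuclideanSpace ℝ (Fin d)), σ.Nonempty →
      (∃ c : EuclideanSpace ℝ (Fin d), ∀ x ∈ σ, dist x c ≤ 1) →
      ∀ x ∈ σ, ∀ y ∈ σ, dist x y ≤ 2) ∧
    (∀ S : Finset (EuclideanSpace ℝ (Fin d)),
      vietorisRips d S (Real.sqrt ((d + 1) / (2 * d))) ⊆ cechComplex d S ∧
      cechComplex d S ⊆ vietorisRips d S 1) := by
  have jung : ∀ σ : Finset (EuclideanSpace ℝ (Fin d)), σ.Nonempty →
      (∀ x ∈ σ, ∀ y ∈ σ, dist x y ≤ 2 * √((d + 1) / (2 * d))) → ∃ c, ∀ x ∈ σ, dist x c ≤ 1 := by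
    intro σ hσ hdiam
    obtain ⟨c, hc⟩ := hσ.exists_forall_dist_le_jung hdiam
    refine ⟨c, fun x hx => (hc x hx).trans ?_⟩
    rw [finrank_euclideanSpace_fin, mul_assoc, ← Real.sqrt_mul (by positivity)]
    have hquarter : (d + 1) / (2 * d) * (d / (2 * (d + 1))) ≤ (1 / 2 : ℝ) ^ 2 := by
      rw [div_mul_div_comm]
      exact div_le_of_le_mul₀ (by positivity) (by positivity) (by nlinarith)
    linarith [Real.sqrt_le_sqrt hquarter, Real.sqrt_sq (by norm_num : (0 : ℝ) ≤ 1 / 2)]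
  have diam_le_two : ∀ σ : Finset (EuclideanSpace ℝ (Fin d)), σ.Nonempty →
      (∃ c, ∀ x ∈ σ, dist x c ≤ 1) → ∀ x ∈ σ, ∀ y ∈ σ, dist x y ≤ 2 := by
    rintro σ - ⟨c, hc⟩ x hx y hy
    linarith [dist_triangle_right x y c, hc x hx, hc y hy]
  refine ⟨jung, diam_le_two, fun S => ⟨?_, ?_⟩⟩
  · rintro σ ⟨hS, hσ, hdiam⟩
    exact ⟨hS, hσ, jung σ hσ hdiam⟩
  · rintro σ ⟨hS, hσ, hc⟩
    exact ⟨hS, hσ, by simpa using diam_le_two σ hσ hc⟩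

/-- **The Čech complex is sandwiched between two Vietoris–Rips complexes**
(via Jung's theorem). (i) A finite nonempty set in `ℝ^d` of diameter at most
`2·√((d+1)/(2d))` is contained in some closed unit ball; (ii) conversely a
finite nonempty set contained in a closed unit ball has diameter at most `2`;
consequently `VR(S, √((d+1)/(2d))) ⊆ Čech(S) ⊆ VR(S, 1)` for every finite
`S ⊆ ℝ^d`. -/
theorem cech_between_vietorisRips (d : ℕ) (hd : 1 ≤ d) :
    (∀ σ : Finset (EuclideanSpace ℝ (Fin d)), σ.Nonempty →
      (∀ x ∈ σ, ∀ y ∈ σ, dist x y ≤ 2 * Real.sqrt ((d + 1) / (2 * d))) →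
      ∃ c : EuclideanSpace ℝ (Fin d), ∀ x ∈ σ, dist x c ≤ 1) ∧
    (∀ σ : Finset (EuclideanSpace ℝ (Fin d)), σ.Nonempty →
      (∃ c : EuclideanSpace ℝ (Fin d), ∀ x ∈ σ, dist x c ≤ 1) →
      ∀ x ∈ σ, ∀ y ∈ σ, dist x y ≤ 2) ∧
    (∀ S : Finset (EuclideanSpace ℝ (Fin d)),
      vietorisRips d S (Real.sqrt ((d + 1) / (2 * d))) ⊆ cechComplex d S ∧
      cechComplex d S ⊆ vietorisRips d S 1) :=
  cech_between_vietorisRips_general d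
end
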